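/- arXiv:1507.07381 — 2 statements merged into one kernel-verified Lean document; each statement's English description precedes it below -/
import Mathlib

section
/- Let H be a graph with at least one edge and let k be its degeneracy. Then AR_d(H) ≤ k·e(H) − k + v(H) − 1; that is, there exists a graph G with maximum degree at most k·e(H) − k + v(H) − 1 (namely the complete graph on k·e(H) − k + v(H) vertices) such that every proper edge colouring of G yields a rainbow copy of H. -/
open SimpleGraph

/-- A proper edge colouring: edges sharing a vertex receive distinct colours. -/
def IsProperEdgeColoring {V α : Type*} (G : SimpleGraph V) (c : Sym2 V → α) : Prop :=
  ∀ e₁ ∈ G.edgeSet, ∀ e₂ ∈ G.edgeSet, e₁ ≠ e₂ → (∃ v, v ∈ e₁ ∧ v ∈ e₂) → c e₁ ≠ c e₂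

/-- The edge-coloured graph `(G, c)` contains a rainbow copy of `H`. -/
def HasRainbowCopy {V W α : Type*} (G : SimpleGraph V) (c : Sym2 V → α)
    (H : SimpleGraph W) : Prop :=
  ∃ f : W ↪ V, (∀ u v, H.Adj u v → G.Adj (f u) (f v)) ∧
    ∀ u v x y, H.Adj u v → H.Adj x y → s(u, v) ≠ s(x, y) →
      c s(f u, f v) ≠ c s(f x, f y)

/-- Every proper edge colouring of `G` yields a rainbow copy of `H`. -/
def ForcesRainbow {V W : Type*} (G : SimpleGraph V) (H : SimpleGraph W) : Prop :=
  ∀ c : Sym2 V → ℕ, IsProperEdgeColoring G c → HasRainbowCopy G c H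

/-- The maximum degree of `G` is at most `k`. -/
def MaxDegreeLE {V : Type*} (G : SimpleGraph V) (k : ℕ) : Prop :=
  ∀ v, (G.neighborSet v).ncard ≤ k

/-- `k` is the degree anti-Ramsey number of `H`: the smallest `k` for which some
graph with maximum degree at most `k` forces a rainbow copy of `H` under any
proper edge colouring. -/
def DegreeAntiRamsey {W : Type*} (H : SimpleGraph W) (k : ℕ) : Prop :=
  (∃ (n : ℕ) (G : SimpleGraph (Fin n)), MaxDegreeLE G k ∧ ForcesRainbow G H) ∧
  ∀ m : ℕ, (∃ (n : ℕ) (G : SimpleGraph (Fin n)), MaxDegreeLE G m ∧ ForcesRainbow G H) → k ≤ m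

/-- `H` is `d`-degenerate: every non-empty (induced) subgraph has a vertex of
degree at most `d` within it. -/
def DegenLE {V : Type*} (H : SimpleGraph V) (d : ℕ) : Prop :=
  ∀ s : Set V, s.Nonempty → ∃ v ∈ s, (H.neighborSet v ∩ s).ncard ≤ d

/-- `k` is the degeneracy of `H`: the smallest `d` such that `H` is `d`-degenerate. -/
def IsDegeneracy {V : Type*} (H : SimpleGraph V) (k : ℕ) : Prop :=
  DegenLE H k ∧ ∀ d : ℕ, DegenLE H d → k ≤ d

/-!
Greedy embedding into a properly coloured complete graph on `k (e(H) - 1) + v(H)` vertices,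
by induction on the vertex set: a nonempty `s` has a vertex `v` with `t ≤ k` neighbours in the
rest of `s`, and a rainbow copy of `H[s \ {v}]` is extended by choosing an image `y` for `v`.
The old edges use at most `e(H) - t` colours, and by properness each image of a neighbour of
`v` has at most one edge of each such colour, so at most `(v(H) - 1) + t (e(H) - t)` choices of
`y` are blocked. Any other `y` works: the `t` new edges at `y` get distinct colours by properness
and avoid the old colours.
-/

open Finset

variable {V W α : Type*}

theorem IsProperEdgeColoring.injOn_top {c : Sym2 W → α}
    (hc : IsProperEdgeColoring (⊤ : SimpleGraph W) c) (x : W) :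
    Set.InjOn (fun y => c s(x, y)) {x}ᶜ := by
  intro y hy z hz hyz
  by_contra hne
  exact hc s(x, y) (by simpa [eq_comm] using hy) s(x, z) (by simpa [eq_comm] using hz)
    (by rwa [Ne, Sym2.congr_right]) ⟨x, by simp, by simp⟩ hyz

theorem IsProperEdgeColoring.card_filter_mem_le [Fintype W] [DecidableEq W]
    [DecidableEq α] {c : Sym2 W → α} (hc : IsProperEdgeColoring (⊤ : SimpleGraph W) c) (x : W)
    (U : Finset α) : #{y | y ≠ x ∧ c s(x, y) ∈ U} ≤ #U :=
  card_le_card_of_injOn _ (fun _ hy => (mem_filter.1 hy).2.2)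
    fun _ hy _ hz => hc.injOn_top x (mem_filter.1 hy).2.1 (mem_filter.1 hz).2.1

section Edges

variable [Fintype V] [DecidableEq V] (H : SimpleGraph V) [DecidableRel H.Adj]

theorem edgeFinset_inter_sym2_insert (v : V) (s : Finset V) :
    H.edgeFinset ∩ (insert v s).sym2 =
      H.edgeFinset ∩ s.sym2 ∪ (H.neighborFinset v ∩ s).image (s(v, ·)) := by
  ext e
  induction e using Sym2.ind with
  | h a b =>
    simp only [mem_inter, mem_union, mem_image, mem_edgeFinset, mem_edgeSet,
      mk_mem_sym2_iff, mem_insert, mem_neighborFinset, Sym2.eq_iff]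
    grind [SimpleGraph.irrefl, SimpleGraph.adj_symm]

theorem disjoint_edgeFinset_inter_sym2_image {v : V} {s : Finset V} (hv : v ∉ s) :
    Disjoint (H.edgeFinset ∩ s.sym2) ((H.neighborFinset v ∩ s).image (s(v, ·))) := by
  refine disjoint_left.2 fun e he he' => ?_
  obtain ⟨t, -, rfl⟩ := mem_image.1 he'
  exact hv (mk_mem_sym2_iff.1 (mem_inter.1 he).2).1

theorem card_edgeFinset_inter_sym2_add_le {v : V} {s : Finset V} (hv : v ∉ s) :
    #(H.edgeFinset ∩ s.sym2) + #(H.neighborFinset v ∩ s) ≤ #H.edgeFinset := by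
  rw [← card_image_of_injective (f := (s(v, ·))) _ (Sym2.mkEmbedding v).injective,
    ← card_union_of_disjoint (disjoint_edgeFinset_inter_sym2_image H hv)]
  exact card_le_card (edgeFinset_inter_sym2_insert H v s ▸ inter_subset_left)

def IsRainbowOn (c : Sym2 W → α) (f : V → W) (s : Finset V) : Prop :=
  Set.InjOn f s ∧ Set.InjOn (fun e : Sym2 V => c (e.map f)) ↑(H.edgeFinset ∩ s.sym2)

variable {H}

theorem IsRainbowOn.update {c : Sym2 W → α} (hc : IsProperEdgeColoring (⊤ : SimpleGraph W) c)
    {f : V → W} {s : Finset V} {v : V} {y : W} (hf : IsRainbowOn H c f s) (hv : v ∉ s)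
    (hy : ∀ x ∈ s, f x ≠ y)
    (hcol : ∀ t ∈ H.neighborFinset v ∩ s, ∀ e ∈ H.edgeFinset ∩ s.sym2,
      c s(f t, y) ≠ c (e.map f)) :
    IsRainbowOn H c (Function.update f v y) (insert v s) := by
  have heq : Set.EqOn f (Function.update f v y) s := fun x hx =>
    (Function.update_of_ne (ne_of_mem_of_not_mem hx hv) y f).symm
  have hmap : ∀ e ∈ H.edgeFinset ∩ s.sym2, e.map (Function.update f v y) = e.map f :=
    fun e he => Sym2.map_congr fun x hx => (heq (mem_sym2_iff.1 (mem_inter.1 he).2 x hx)).symm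
  constructor
  · rw [coe_insert, Set.injOn_insert (mod_cast hv)]
    refine ⟨hf.1.congr heq, ?_⟩
    rintro ⟨x, hx, hxy⟩
    rw [← heq hx, Function.update_self] at hxy
    exact hy x hx hxy
  · rw [edgeFinset_inter_sym2_insert, coe_union,
      Set.injOn_union (disjoint_coe.2 (disjoint_edgeFinset_inter_sym2_image H hv)), coe_image]
    refine ⟨hf.2.congr fun e he => ?_, ?_, ?_⟩
    · simp only [hmap e he]
    · rintro _ ⟨t, ht, rfl⟩ _ ⟨t', ht', rfl⟩ h
      have hts := (mem_inter.1 ht).2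
      have hts' := (mem_inter.1 ht').2
      simp only [Sym2.map_mk, Function.update_self, ← heq hts, ← heq hts'] at h
      have := hc.injOn_top y (hy t hts) (hy t' hts') h
      rw [hf.1 hts hts' this]
    · rintro e he _ ⟨t, ht, rfl⟩
      have hts := (mem_inter.1 ht).2
      simp only [hmap e he, Sym2.map_mk, Function.update_self, ← heq hts]
      rw [Sym2.eq_swap]
      exact (hcol t ht e he).symm

theorem IsRainbowOn.exists_update [Fintype W] {c : Sym2 W → α}
    (hc : IsProperEdgeColoring (⊤ : SimpleGraph W) c) {f : V → W} {s : Finset V} {v : V}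
    (hf : IsRainbowOn H c f s) (hv : v ∉ s)
    (hW : #s + #(H.neighborFinset v ∩ s) * (#H.edgeFinset - #(H.neighborFinset v ∩ s)) <
      Fintype.card W) :
    ∃ y, IsRainbowOn H c (Function.update f v y) (insert v s) := by
  classical
  set T := H.neighborFinset v ∩ s
  set U := (H.edgeFinset ∩ s.sym2).image fun e => c (e.map f)
  have hU : #U ≤ #H.edgeFinset - #T :=
    card_image_le.trans (Nat.le_sub_of_add_le (card_edgeFinset_inter_sym2_add_le H hv))
  set bad := s.image f ∪ T.biUnion fun t => {y | y ≠ f t ∧ c s(f t, y) ∈ U}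
  have hbad : #bad < #(univ : Finset W) := calc
    #bad ≤ #s + #T * #U := (card_union_le _ _).trans (add_le_add card_image_le
      (card_biUnion_le_card_mul _ _ _ fun t _ => hc.card_filter_mem_le (f t) U))
    _ ≤ #s + #T * (#H.edgeFinset - #T) := by gcongr
    _ < #(univ : Finset W) := by rwa [card_univ]
  obtain ⟨y, -, hy⟩ := exists_mem_notMem_of_card_lt_card hbad
  have hfy : ∀ x ∈ s, f x ≠ y := fun x hx hxy =>
    hy (mem_union_left _ (mem_image.2 ⟨x, hx, hxy⟩))
  refine ⟨y, hf.update hc hv hfy fun t ht e he hce => hy (mem_union_right _ ?_)⟩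
  exact mem_biUnion.2 ⟨t, ht, mem_filter.2 ⟨mem_univ _, (hfy t (mem_inter.1 ht).2).symm,
    hce ▸ mem_image_of_mem _ he⟩⟩

theorem IsRainbowOn.hasRainbowCopy {c : Sym2 W → α} {f : V → W} (hf : IsRainbowOn H c f univ) :
    HasRainbowCopy (⊤ : SimpleGraph W) c H := by
  have hinj : Function.Injective f := by simpa using hf.1
  refine ⟨⟨f, hinj⟩, fun u v huv => (top_adj _ _).2 (hinj.ne huv.ne), ?_⟩
  exact fun u v x y huv hxy hne h => hne (hf.2 (by simpa using huv) (by simpa using hxy) h)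

end Edges

theorem Nat.mul_sub_le_mul_sub_one {t k e : ℕ} (h : t ≤ k) : t * (e - t) ≤ k * (e - 1) := by
  rcases t.eq_zero_or_pos with rfl | ht
  · simp
  · exact Nat.mul_le_mul h (by omega)

section Embedding

variable [Fintype V] [DecidableEq V] {H : SimpleGraph V} [DecidableRel H.Adj] [Fintype W]
  {c : Sym2 W → α}

theorem exists_isRainbowOn {k : ℕ} (hH : DegenLE H k)
    (hc : IsProperEdgeColoring (⊤ : SimpleGraph W) c)
    (hW : Fintype.card V + k * (#H.edgeFinset - 1) ≤ Fintype.card W) (s : Finset V) :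
    ∃ f : V → W, IsRainbowOn H c f s := by
  induction s using Finset.strongInduction with
  | H s ih =>
    rcases s.eq_empty_or_nonempty with rfl | hs
    · obtain ⟨g⟩ := Function.Embedding.nonempty_of_card_le (Nat.le_of_add_right_le hW)
      exact ⟨g, by simp [IsRainbowOn]⟩
    obtain ⟨v, hv, hdeg⟩ := hH s (mod_cast hs)
    have hT : #(H.neighborFinset v ∩ s.erase v) ≤ k := calc
      #(H.neighborFinset v ∩ s.erase v) ≤ #(H.neighborFinset v ∩ s) :=
        card_le_card (inter_subset_inter_left (erase_subset v s))
      _ = (H.neighborSet v ∩ s).ncard := by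
        rw [← Set.ncard_coe_finset, coe_inter, coe_neighborFinset]
      _ ≤ k := hdeg
    obtain ⟨f, hf⟩ := ih _ (erase_ssubset hv)
    have hs' : #(s.erase v) < Fintype.card V :=
      (card_erase_lt_of_mem hv).trans_le (card_le_univ s)
    obtain ⟨y, hy⟩ := hf.exists_update hc (notMem_erase v s) <| by
      have := Nat.mul_sub_le_mul_sub_one (e := #H.edgeFinset) hT
      omega
    exact ⟨_, insert_erase hv ▸ hy⟩

theorem forcesRainbow_top {k : ℕ} (hH : DegenLE H k)
    (hW : Fintype.card V + k * (#H.edgeFinset - 1) ≤ Fintype.card W) :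
    ForcesRainbow (⊤ : SimpleGraph W) H := fun _ hc =>
  (exists_isRainbowOn hH hc hW univ).elim fun _ hf => hf.hasRainbowCopy

end Embedding

theorem maxDegreeLE_top [Finite W] : MaxDegreeLE (⊤ : SimpleGraph W) (Nat.card W - 1) := by
  intro v
  rw [neighborSet_top, Set.ncard_compl, Set.ncard_singleton]

theorem stmt_1_general {V : Type} [Fintype V] (H : SimpleGraph V)
    (k : ℕ) (hk : IsDegeneracy H k) :
    ∃ (n : ℕ) (G : SimpleGraph (Fin n)),
      MaxDegreeLE G (k * H.edgeSet.ncard - k + Fintype.card V - 1) ∧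
      ForcesRainbow G H := by
  classical
  refine ⟨Fintype.card V + k * (#H.edgeFinset - 1), ⊤, ?_, forcesRainbow_top hk.1 (by simp)⟩
  have hE : H.edgeSet.ncard = #H.edgeFinset := Set.ncard_eq_toFinset_card' _
  convert maxDegreeLE_top (W := Fin _) using 1
  rw [Nat.card_eq_fintype_card, Fintype.card_fin, hE, Nat.mul_sub_one]
  omega

theorem stmt_1 {V : Type} [Fintype V] (H : SimpleGraph V) (hE : H.edgeSet.Nonempty)
    (k : ℕ) (hk : IsDegeneracy H k) :
    ∃ (n : ℕ) (G : SimpleGraph (Fin n)),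
      MaxDegreeLE G (k * H.edgeSet.ncard - k + Fintype.card V - 1) ∧
      ForcesRainbow G H :=
  stmt_1_general H k hk
end

section
/- Every proper edge colouring of the graph obtained from the complete graph K_4 by subdividing one of its edges once yields a rainbow copy of the triangle with a pendant edge. Consequently, AR_d of the triangle with a pendant edge equals 3, one less than its number of edges. -/
open SimpleGraph

/-- The simple graph generated by symmetrising a relation and removing loops. -/
def graphFromRel {V : Type*} (r : V → V → Prop) : SimpleGraph V where
  Adj a b := a ≠ b ∧ (r a b ∨ r b a)
  symm := ⟨fun a b ⟨hne, h⟩ => ⟨hne.symm, h.symm⟩⟩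
  loopless := ⟨fun _ ⟨hne, _⟩ => hne rfl⟩

/-- The triangle `x₀x₁x₂` with a pendant edge `x₂x₃`. -/
def trianglePendant : SimpleGraph (Fin 4) :=
  graphFromRel (fun a b =>
    (a, b) = (0, 1) ∨ (a, b) = (1, 2) ∨ (a, b) = (0, 2) ∨ (a, b) = (2, 3))

/-- The graph obtained from `K₄` on `{0,1,2,3}` by subdividing the edge `01`
once, using the new vertex `4`. -/
def subdividedK4 : SimpleGraph (Fin 5) :=
  graphFromRel (fun a b =>
    (a, b) = (0, 2) ∨ (a, b) = (0, 3) ∨ (a, b) = (1, 2) ∨ (a, b) = (1, 3) ∨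
    (a, b) = (2, 3) ∨ (a, b) = (0, 4) ∨ (a, b) = (1, 4))

/-! In any proper colouring, the triangles `230` and `231` of `subdividedK4` are rainbow, and a
pendant edge at a triangle vertex differs in colour from the two triangle edges it meets. So a
triangle with pendant edge is rainbow as soon as the pendant edge and the opposite triangle edge
`23` get different colours. The candidate pendant edges `04` and `14` meet at `4`, hence one of
them is coloured differently from `23`.

Conversely, an injective colouring is proper, so a graph forcing a rainbow copy of `H` contains
a copy of `H`; the copy of the degree-3 vertex `2` of the triangle with pendant edge then has
degree at least 3. -/

instance : DecidableRel trianglePendant.Adj := fun a b =>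
  inferInstanceAs (Decidable (a ≠ b ∧ _))

instance : DecidableRel subdividedK4.Adj := fun a b =>
  inferInstanceAs (Decidable (a ≠ b ∧ _))

lemma edgeSet_trianglePendant :
    trianglePendant.edgeSet = {s(0, 1), s(1, 2), s(0, 2), s(2, 3)} := by
  ext ⟨u, v⟩
  simp only [mem_edgeSet, Set.mem_insert_iff, Set.mem_singleton_iff]
  revert u v
  decide

section Rainbow

variable {V W α : Type*} {G : SimpleGraph V} {H : SimpleGraph W} {c : Sym2 V → α}

lemma IsProperEdgeColoring.ne_of_adj (hc : IsProperEdgeColoring G c) {x y z : V}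
    (hxy : G.Adj x y) (hxz : G.Adj x z) (hyz : y ≠ z) : c s(x, y) ≠ c s(x, z) :=
  hc _ hxy _ hxz (mt Sym2.congr_right.mp hyz) ⟨x, Sym2.mem_mk_left x y, Sym2.mem_mk_left x z⟩

lemma isProperEdgeColoring_of_injective (hc : Function.Injective c) :
    IsProperEdgeColoring G c :=
  fun _ _ _ _ hne _ h => hne (hc h)

lemma hasRainbowCopy_of_injOn {f : W → V} (hf : Function.Injective f)
    (hadj : ∀ e ∈ H.edgeSet, e.map f ∈ G.edgeSet)
    (hrainbow : Set.InjOn (c ∘ Sym2.map f) H.edgeSet) : HasRainbowCopy G c H :=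
  ⟨⟨f, hf⟩, fun u v huv => hadj s(u, v) huv,
    fun _ _ _ _ huv hxy hne h => hne (hrainbow huv hxy (by simpa using h))⟩

lemma ncard_neighborSet_le_of_adj [Finite V] (f : W ↪ V)
    (hadj : ∀ u v, H.Adj u v → G.Adj (f u) (f v)) (w : W) :
    (H.neighborSet w).ncard ≤ (G.neighborSet (f w)).ncard := by
  rw [← Set.ncard_image_of_injective _ f.injective]
  exact Set.ncard_le_ncard (by rintro _ ⟨u, hu, rfl⟩; exact hadj w u hu)

lemma ForcesRainbow.ncard_neighborSet_le [Finite V] (h : ForcesRainbow G H)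
    {k : ℕ} (hk : MaxDegreeLE G k) (w : W) : (H.neighborSet w).ncard ≤ k := by
  obtain ⟨c, hc⟩ := Countable.exists_injective_nat (Sym2 V)
  obtain ⟨f, hadj, -⟩ := h c (isProperEdgeColoring_of_injective hc)
  exact (ncard_neighborSet_le_of_adj f hadj w).trans (hk (f w))

lemma hasRainbowCopy_trianglePendant (hc : IsProperEdgeColoring G c) {a b x y : V}
    (hab : G.Adj a b) (hbx : G.Adj b x) (hax : G.Adj a x) (hxy : G.Adj x y)
    (hya : y ≠ a) (hyb : y ≠ b) (hcol : c s(a, b) ≠ c s(x, y)) :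
    HasRainbowCopy G c trianglePendant := by
  have hinj : Function.Injective ![a, b, x, y] := by
    intro i j h
    fin_cases i <;> fin_cases j <;> simp_all [hab.ne, hbx.ne, hax.ne, hxy.ne, hya.symm, hyb.symm]
  refine hasRainbowCopy_of_injOn hinj ?_ ?_
  · simp only [edgeSet_trianglePendant, Set.forall_mem_insert, Set.mem_singleton_iff, forall_eq,
      Sym2.map_mk, mem_edgeSet]
    exact ⟨hab, hbx, hax, hxy⟩
  · simp only [edgeSet_trianglePendant, Fin.isValue, Set.mem_insert_iff, Sym2.eq, Sym2.rel_iff',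
      Prod.mk.injEq, zero_ne_one, Fin.reduceEq, and_self, Prod.swap_prod_mk, and_true, or_self,
      and_false, one_ne_zero, Set.mem_singleton_iff, not_false_eq_true, Set.injOn_insert,
      Set.injOn_singleton, Function.comp_apply, Set.image_singleton, Sym2.map_mk, Matrix.cons_val,
      Matrix.cons_val_zero, true_and, Matrix.cons_val_one, Set.mem_image, exists_eq_or_imp,
      ↓existsAndEq, not_or]
    refine ⟨⟨?_, ?_, ?_⟩, ?_, ?_, hcol.symm⟩
    · rw [Sym2.eq_swap]; exact hc.ne_of_adj hax.symm hxy hya.symm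
    · rw [Sym2.eq_swap, Sym2.eq_swap (a := b)]; exact hc.ne_of_adj hax.symm hbx.symm hab.ne
    · rw [Sym2.eq_swap (a := b)]; exact hc.ne_of_adj hxy hbx.symm hyb
    · rw [Sym2.eq_swap (a := a)]; exact hc.ne_of_adj hbx hab.symm hax.ne.symm
    · exact hc.ne_of_adj hax hab hbx.ne.symm

end Rainbow

lemma forcesRainbow_subdividedK4_trianglePendant :
    ForcesRainbow subdividedK4 trianglePendant := by
  intro c hc
  have hpendants : c s(0, 4) ≠ c s(1, 4) := by
    rw [Sym2.eq_swap, Sym2.eq_swap (a := 1)]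
    exact hc.ne_of_adj (by decide) (by decide) (by decide)
  by_cases h : c s(2, 3) = c s(0, 4)
  · exact hasRainbowCopy_trianglePendant hc (x := 1) (by decide) (by decide) (by decide)
      (by decide) (by decide) (by decide) (h ▸ hpendants)
  · exact hasRainbowCopy_trianglePendant hc (x := 0) (by decide) (by decide) (by decide)
      (by decide) (by decide) (by decide) h

lemma maxDegreeLE_subdividedK4 : MaxDegreeLE subdividedK4 3 := by
  intro v
  rw [Set.ncard_eq_toFinset_card']
  revert v
  decide

lemma ncard_neighborSet_trianglePendant_two : (trianglePendant.neighborSet 2).ncard = 3 := by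
  rw [Set.ncard_eq_toFinset_card']
  decide

lemma ncard_edgeSet_trianglePendant : trianglePendant.edgeSet.ncard = 4 := by
  rw [← coe_edgeFinset, Set.ncard_coe_finset]
  decide

theorem stmt_19 :
    ForcesRainbow subdividedK4 trianglePendant ∧
    DegreeAntiRamsey trianglePendant 3 ∧ trianglePendant.edgeSet.ncard = 4 := by
  refine ⟨forcesRainbow_subdividedK4_trianglePendant, ⟨?_, ?_⟩, ncard_edgeSet_trianglePendant⟩
  · exact ⟨5, subdividedK4, maxDegreeLE_subdividedK4, forcesRainbow_subdividedK4_trianglePendant⟩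
  · rintro m ⟨_, _, hG, hforces⟩
    exact ncard_neighborSet_trianglePendant_two ▸ hforces.ncard_neighborSet_le hG 2
end
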